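/- For all types A1,…,An,B of L^∘: the sequent A1,…,An → B is derivable in L^∘ if and only if the sequent A1·…·An → B (product associated to the left) is derivable in the Hilbert-style calculus L^∘_H. -/

import Mathlib

/-- Types of the Lambek calculus with the cyclic shift `L^∘`, built from
primitive types `P` by `\` (`ldiv A B = A \ B`), `/` (`rdiv B A = B / A`),
`·` (`mul`) and the cyclic shift `^∘` (`circ`). -/
inductive Fm (P : Type) : Type
  | prim : P → Fm P
  | ldiv : Fm P → Fm P → Fm P
  | rdiv : Fm P → Fm P → Fm P
  | mul  : Fm P → Fm P → Fm P
  | circ : Fm P → Fm P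
deriving DecidableEq

open Fm

/-- Derivability of sequents in the Lambek calculus with the cyclic shift `L^∘`.
The Boolean flag indicates whether the rule (cut) may be used:
`Dv P true` is `L^∘` (with cut), `Dv P false` is its cut-free part. -/
inductive Dv (P : Type) : Bool → List (Fm P) → Fm P → Prop
  | ax (c : Bool) (A : Fm P) :
      Dv P c [A] A
  | ldivL (c : Bool) (Γ Δ Pi : List (Fm P)) (A B C : Fm P) :
      Dv P c (Γ ++ B :: Δ) C → Dv P c Pi A → Pi ≠ [] →
      Dv P c (Γ ++ Pi ++ ldiv A B :: Δ) C
  | ldivR (c : Bool) (Pi : List (Fm P)) (A B : Fm P) :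
      Dv P c (A :: Pi) B → Pi ≠ [] →
      Dv P c Pi (ldiv A B)
  | rdivL (c : Bool) (Γ Δ Pi : List (Fm P)) (A B C : Fm P) :
      Dv P c (Γ ++ B :: Δ) C → Dv P c Pi A → Pi ≠ [] →
      Dv P c (Γ ++ rdiv B A :: (Pi ++ Δ)) C
  | rdivR (c : Bool) (Pi : List (Fm P)) (A B : Fm P) :
      Dv P c (Pi ++ [A]) B → Pi ≠ [] →
      Dv P c Pi (rdiv B A)
  | mulL (c : Bool) (Γ Δ : List (Fm P)) (A B C : Fm P) :
      Dv P c (Γ ++ A :: B :: Δ) C →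
      Dv P c (Γ ++ mul A B :: Δ) C
  | mulR (c : Bool) (Pi Psi : List (Fm P)) (A B : Fm P) :
      Dv P c Pi A → Dv P c Psi B → Pi ≠ [] → Psi ≠ [] →
      Dv P c (Pi ++ Psi) (mul A B)
  | circR (c : Bool) (Pi : List (Fm P)) (A : Fm P) :
      Dv P c Pi A →
      Dv P c Pi (circ A)
  | circL (c : Bool) (A B : Fm P) :
      Dv P c [B] (circ A) →
      Dv P c [circ B] (circ A)
  | circC (c : Bool) (Pi Psi : List (Fm P)) (A : Fm P) :
      Dv P c (Pi ++ Psi) (circ A) → Pi ≠ [] → Psi ≠ [] →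
      Dv P c (Psi ++ Pi) (circ A)
  | cut (Γ Δ Pi : List (Fm P)) (A B : Fm P) :
      Dv P true Pi A → Dv P true (Γ ++ A :: Δ) B → Pi ≠ [] →
      Dv P true (Γ ++ Pi ++ Δ) B

/-- The Hilbert-style calculus `L^∘_H`, deriving sequents `A → B` between
single types. -/
inductive DH (P : Type) : Fm P → Fm P → Prop
  | ax (A : Fm P) : DH P A A
  | assocR (A B C : Fm P) : DH P (Fm.mul A (Fm.mul B C)) (Fm.mul (Fm.mul A B) C)
  | assocL (A B C : Fm P) : DH P (Fm.mul (Fm.mul A B) C) (Fm.mul A (Fm.mul B C))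
  | circAx (C : Fm P) : DH P C (Fm.circ C)
  | mulOfRdiv (A B C : Fm P) : DH P A (Fm.rdiv C B) → DH P (Fm.mul A B) C
  | mulOfLdiv (A B C : Fm P) : DH P B (Fm.ldiv A C) → DH P (Fm.mul A B) C
  | rdivOfMul (A B C : Fm P) : DH P (Fm.mul A B) C → DH P A (Fm.rdiv C B)
  | ldivOfMul (A B C : Fm P) : DH P (Fm.mul A B) C → DH P B (Fm.ldiv A C)
  | trans (A B C : Fm P) : DH P A B → DH P B C → DH P A C
  | circMono (A C : Fm P) : DH P A (Fm.circ C) → DH P (Fm.circ A) (Fm.circ C)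
  | circSwap (A B C : Fm P) :
      DH P (Fm.mul A B) (Fm.circ C) → DH P (Fm.mul B A) (Fm.circ C)


/-!
In `L^∘_H` the product is monotone in both arguments (via the residuation rules) and associative
up to interderivability, so the left-associated product of an antecedent behaves like the
antecedent itself: replacing a nonempty block of it by a type it derives is sound. This makes
(cut) and the left rules for `\`, `/`, `·` sound, while the right rules and the `∘` rules are
the residuation, `∘` and cyclic rules of `L^∘_H`. Conversely every axiom and rule of `L^∘_H` is
derivable in `L^∘` with cut, and `A₁, …, Aₙ → A₁ · … · Aₙ` lets one cut the product away.
-/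

open Fm

namespace DH

variable {P : Type}

theorem mul_mono {A A' B B' : Fm P} (hA : DH P A A') (hB : DH P B B') :
    DH P (mul A B) (mul A' B') :=
  mulOfRdiv _ _ _ <| trans _ _ _ hA <| rdivOfMul _ _ _ <| mulOfLdiv _ _ _ <|
    trans _ _ _ hB <| ldivOfMul _ _ _ (ax _)

theorem foldl_mono (Δ : List (Fm P)) {X Y : Fm P} (h : DH P X Y) :
    DH P (Δ.foldl mul X) (Δ.foldl mul Y) := by
  induction Δ generalizing X Y with
  | nil => exact h
  | cons _ _ ih => exact ih (mul_mono h (ax _))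

theorem foldl_mul_assoc (Δ : List (Fm P)) (X B : Fm P) :
    DH P (Δ.foldl mul (mul X B)) (mul X (Δ.foldl mul B)) ∧
      DH P (mul X (Δ.foldl mul B)) (Δ.foldl mul (mul X B)) := by
  induction Δ generalizing X B with
  | nil => exact ⟨ax _, ax _⟩
  | cons C Δ ih =>
    obtain ⟨hXB, hXB'⟩ := ih (mul X B) C
    obtain ⟨hB, hB'⟩ := ih B C
    exact ⟨trans _ _ _ hXB <| trans _ _ _ (assocL _ _ _) (mul_mono (ax _) hB'),
      trans _ _ _ (mul_mono (ax _) hB) <| trans _ _ _ (assocR _ _ _) hXB'⟩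

theorem foldl_append_cons (A B : Fm P) (Γ Δ : List (Fm P)) :
    DH P ((Γ ++ B :: Δ).foldl mul A) (mul (Γ.foldl mul A) (Δ.foldl mul B)) ∧
      DH P (mul (Γ.foldl mul A) (Δ.foldl mul B)) ((Γ ++ B :: Δ).foldl mul A) := by
  rw [List.foldl_append]
  exact foldl_mul_assoc Δ _ B

end DH

section Soundness

variable {P : Type}

/-- The empty antecedent, which `L^∘` never derives, is read as `True`. -/
def HilbertSeq : List (Fm P) → Fm P → Prop
  | [], _ => True
  | A :: Γ, B => DH P (Γ.foldl mul A) B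

theorem HilbertSeq.trans {L : List (Fm P)} {A B : Fm P} (h : HilbertSeq L A) (hAB : DH P A B) :
    HilbertSeq L B := by
  cases L with
  | nil => trivial
  | cons => exact DH.trans _ _ _ h hAB

theorem hilbertSeq_append_cons_iff (A B : Fm P) (Γ Δ : List (Fm P)) (C : Fm P) :
    HilbertSeq (A :: Γ ++ B :: Δ) C ↔ DH P (mul (Γ.foldl mul A) (Δ.foldl mul B)) C :=
  ⟨fun h => DH.trans _ _ _ (DH.foldl_append_cons A B Γ Δ).2 h,
    fun h => DH.trans _ _ _ (DH.foldl_append_cons A B Γ Δ).1 h⟩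

theorem HilbertSeq.replace {Γ Δ Pi Pi' : List (Fm P)} {Q Q' C : Fm P}
    (hrep : DH P (Pi.foldl mul Q) (Pi'.foldl mul Q')) (h : HilbertSeq (Γ ++ Q' :: Pi' ++ Δ) C) :
    HilbertSeq (Γ ++ Q :: Pi ++ Δ) C := by
  have hPiΔ : DH P ((Pi ++ Δ).foldl mul Q) ((Pi' ++ Δ).foldl mul Q') := by
    rw [List.foldl_append, List.foldl_append]
    exact DH.foldl_mono Δ hrep
  cases Γ with
  | nil => exact DH.trans _ _ _ hPiΔ h
  | cons G Γ =>
    simp only [List.cons_append, List.append_assoc] at h ⊢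
    exact (hilbertSeq_append_cons_iff _ _ _ _ _).2 <|
      DH.trans _ _ _ (DH.mul_mono (DH.ax _) hPiΔ) ((hilbertSeq_append_cons_iff _ _ _ _ _).1 h)

theorem HilbertSeq.cut {Γ Δ Pi : List (Fm P)} {A C : Fm P} (hPi : HilbertSeq Pi A)
    (hne : Pi ≠ []) (h : HilbertSeq (Γ ++ A :: Δ) C) : HilbertSeq (Γ ++ Pi ++ Δ) C := by
  obtain ⟨Q, Pi, rfl⟩ := List.exists_cons_of_ne_nil hne
  exact HilbertSeq.replace (Pi' := []) hPi (by simpa using h)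

theorem Dv.hilbertSeq {c : Bool} {L : List (Fm P)} {B : Fm P} (h : Dv P c L B) :
    HilbertSeq L B := by
  induction h with
  | ax => exact DH.ax _
  | ldivL _ _ _ Pi A B _ _ _ hne ih ihPi =>
    obtain ⟨Q, Pi, rfl⟩ := List.exists_cons_of_ne_nil hne
    have hPi : HilbertSeq (Q :: Pi ++ [ldiv A B]) B :=
      (hilbertSeq_append_cons_iff _ _ _ _ _).2 <|
        DH.trans _ _ _ (DH.mul_mono ihPi (DH.ax _)) (DH.mulOfLdiv _ _ _ (DH.ax _))
    simpa using HilbertSeq.cut hPi (by simp) ih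
  | ldivR _ Pi A B _ hne ih =>
    obtain ⟨Q, Pi, rfl⟩ := List.exists_cons_of_ne_nil hne
    exact DH.ldivOfMul _ _ _ ((hilbertSeq_append_cons_iff A Q [] Pi B).1 ih)
  | rdivL _ _ _ Pi A B _ _ _ hne ih ihPi =>
    obtain ⟨Q, Pi, rfl⟩ := List.exists_cons_of_ne_nil hne
    have hPi : HilbertSeq (rdiv B A :: Q :: Pi) B :=
      (hilbertSeq_append_cons_iff _ _ [] _ _).2 <|
        DH.trans _ _ _ (DH.mul_mono (DH.ax _) ihPi) (DH.mulOfRdiv _ _ _ (DH.ax _))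
    simpa using HilbertSeq.cut hPi (by simp) ih
  | rdivR _ Pi A B _ hne ih =>
    obtain ⟨Q, Pi, rfl⟩ := List.exists_cons_of_ne_nil hne
    exact DH.rdivOfMul _ _ _ ((hilbertSeq_append_cons_iff Q A Pi [] B).1 ih)
  | mulL _ _ _ A B _ _ ih =>
    simpa using HilbertSeq.replace (Pi := []) (Pi' := [B]) (DH.ax (mul A B)) (by simpa using ih)
  | mulR _ Pi Ψ A B _ _ hPi hΨ ihPi ihΨ =>
    obtain ⟨Q, Pi, rfl⟩ := List.exists_cons_of_ne_nil hPi
    obtain ⟨R, Ψ, rfl⟩ := List.exists_cons_of_ne_nil hΨ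
    exact (hilbertSeq_append_cons_iff _ _ _ _ _).2 (DH.mul_mono ihPi ihΨ)
  | circR _ _ _ _ ih => exact ih.trans (DH.circAx _)
  | circL _ _ _ _ ih => exact DH.circMono _ _ ih
  | circC _ Pi Ψ A _ hPi hΨ ih =>
    obtain ⟨Q, Pi, rfl⟩ := List.exists_cons_of_ne_nil hPi
    obtain ⟨R, Ψ, rfl⟩ := List.exists_cons_of_ne_nil hΨ
    exact (hilbertSeq_append_cons_iff _ _ _ _ _).2 <|
      DH.circSwap _ _ _ ((hilbertSeq_append_cons_iff _ _ _ _ _).1 ih)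
  | cut _ _ _ _ _ _ _ hne ihPi ih => exact HilbertSeq.cut ihPi hne ih

end Soundness

section Completeness

variable {P : Type}

theorem Dv.cut_singleton {Pi : List (Fm P)} {A B : Fm P} (hPi : Dv P true Pi A)
    (h : Dv P true [A] B) (hne : Pi ≠ []) : Dv P true Pi B := by
  simpa using Dv.cut [] [] Pi A B hPi h hne

theorem Dv.pair_mul (A B : Fm P) : Dv P true [A, B] (mul A B) := by
  simpa using Dv.mulR true [A] [B] A B (Dv.ax _ _) (Dv.ax _ _) (by simp) (by simp)

theorem Dv.mul_singleton_iff {A B C : Fm P} : Dv P true [mul A B] C ↔ Dv P true [A, B] C :=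
  ⟨fun h => Dv.cut_singleton (Dv.pair_mul A B) h (by simp),
    fun h => by simpa using Dv.mulL true [] [] A B C h⟩

theorem Dv.foldl_mul (A : Fm P) (Γ : List (Fm P)) : Dv P true (A :: Γ) (Γ.foldl mul A) := by
  induction Γ generalizing A with
  | nil => exact Dv.ax _ _
  | cons B Γ ih => simpa using Dv.cut [] Γ [A, B] _ _ (Dv.pair_mul A B) (ih (mul A B)) (by simp)

theorem DH.dv_singleton {A B : Fm P} (h : DH P A B) : Dv P true [A] B := by
  induction h with
  | ax A => exact Dv.ax _ _
  | assocR A B C =>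
    rw [Dv.mul_singleton_iff]
    have hABC := Dv.mulR true [A, B] [C] _ C (Dv.pair_mul A B) (Dv.ax _ _) (by simp) (by simp)
    simpa using Dv.mulL true [A] [] B C _ hABC
  | assocL A B C =>
    rw [Dv.mul_singleton_iff]
    have hABC := Dv.mulR true [A] [B, C] A _ (Dv.ax _ _) (Dv.pair_mul B C) (by simp) (by simp)
    simpa using Dv.mulL true [] [C] A B _ hABC
  | circAx C => exact Dv.circR _ _ _ (Dv.ax _ _)
  | mulOfRdiv A B C _ ih =>
    rw [Dv.mul_singleton_iff]
    have hC : Dv P true [rdiv C B, B] C := by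
      simpa using Dv.rdivL true [] [] [B] B C C (Dv.ax _ _) (Dv.ax _ _) (by simp)
    simpa using Dv.cut [] [B] [A] _ C ih hC (by simp)
  | mulOfLdiv A B C _ ih =>
    rw [Dv.mul_singleton_iff]
    have hC : Dv P true [A, ldiv A C] C := by
      simpa using Dv.ldivL true [] [] [A] A C C (Dv.ax _ _) (Dv.ax _ _) (by simp)
    simpa using Dv.cut [A] [] [B] _ C ih hC (by simp)
  | rdivOfMul A B C _ ih => exact Dv.rdivR true [A] B C (Dv.mul_singleton_iff.1 ih) (by simp)
  | ldivOfMul A B C _ ih => exact Dv.ldivR true [B] A C (Dv.mul_singleton_iff.1 ih) (by simp)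
  | trans _ _ _ _ _ ih₁ ih₂ => exact Dv.cut_singleton ih₁ ih₂ (by simp)
  | circMono A C _ ih => exact Dv.circL _ _ _ ih
  | circSwap A B C _ ih =>
    rw [Dv.mul_singleton_iff]
    simpa using Dv.circC true [A] [B] C (Dv.mul_singleton_iff.1 ih) (by simp) (by simp)

end Completeness

/-- Equivalence of the sequent calculus `L^∘` with the Hilbert-style calculus
`L^∘_H`: `A1,…,An → B` is derivable in `L^∘` iff `A1·…·An → B` (product
associated to the left) is derivable in `L^∘_H`. -/
theorem Lcirc_iff_Hilbert (P : Type) (A : Fm P) (Γ : List (Fm P)) (B : Fm P) :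
    Dv P true (A :: Γ) B ↔ DH P (Γ.foldl Fm.mul A) B :=
  ⟨Dv.hilbertSeq, fun h => Dv.cut_singleton (Dv.foldl_mul A Γ) h.dv_singleton (by simp)⟩
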